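/- Let g be a symmetric nondegenerate m×m matrix of functions g_{αβ}(x,y) with inverse g^{αβ}. If N_β^α are coefficients of a nonlinear connection and g_{γβ/} denotes the components of the (0,2)-tensor ∇g (the dynamical covariant derivative of g), then the modified coefficients Ñ_β^α = N_β^α − ½ g^{αγ} g_{γβ/} define a connection for which the dynamical covariant derivative of g vanishes: with g̃_{αβ/} computed using Ñ in place of N via g̃_{αβ/} = S(g_{αβ}) + g_{γβ}(Ñ_α^γ + ∂S^γ/∂y^α) + g_{γα}(Ñ_β^γ + ∂S^γ/∂y^β), one has g̃_{αβ/} = 0. -/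
import Mathlib


open scoped BigOperators

/-- given a symmetric invertible metric `g`, a semispray action `Sg` on
the metric components, and connection coefficients `N`, the modified coefficients
`Ñ_β^α = N_β^α − ½ g^{αγ} g_{γβ/}` render the dynamical covariant derivative of `g`
zero. Here `g_{αβ/} = S(g_{αβ}) + g_{γβ}(N_α^γ + ∂S^γ/∂y^α) + g_{γα}(N_β^γ + ∂S^γ/∂y^β)`. -/
theorem stmt_12 (m : ℕ) (g ginv Sg dS N : Fin m → Fin m → ℝ)
    (hgsym : ∀ α β, g α β = g β α)
    (hSgsym : ∀ α β, Sg α β = Sg β α)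
    (hinv : ∀ α β, (∑ γ, g α γ * ginv γ β) = if α = β then (1 : ℝ) else 0)
    (hinv' : ∀ α β, (∑ γ, ginv α γ * g γ β) = if α = β then (1 : ℝ) else 0) :
    letI gsl : Fin m → Fin m → ℝ := fun α β =>
      Sg α β + (∑ γ, g γ β * (N α γ + dS α γ)) + ∑ γ, g γ α * (N β γ + dS β γ)
    letI Nt : Fin m → Fin m → ℝ := fun β α =>
      N β α - (1/2) * ∑ γ, ginv α γ * gsl γ β
    ∀ α β, Sg α β + (∑ γ, g γ β * (Nt α γ + dS α γ))
        + (∑ γ, g γ α * (Nt β γ + dS β γ)) = 0 := by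
  intro α β
  set gsl : Fin m → Fin m → ℝ := fun a b =>
    Sg a b + (∑ γ, g γ b * (N a γ + dS a γ)) + ∑ γ, g γ a * (N b γ + dS b γ) with hgsl
  show Sg α β
      + (∑ γ, g γ β * ((N α γ - (1/2) * ∑ δ, ginv γ δ * gsl δ α) + dS α γ))
      + (∑ γ, g γ α * ((N β γ - (1/2) * ∑ δ, ginv γ δ * gsl δ β) + dS β γ)) = 0
  have hgslsym : ∀ a b, gsl a b = gsl b a := by
    intro a b
    simp only [hgsl, hSgsym a b]
    ring
  have key : ∀ a b, (∑ γ, g γ b * ∑ δ, ginv γ δ * gsl δ a) = gsl b a := by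
    intro a b
    have h1 : (∑ γ, g γ b * ∑ δ, ginv γ δ * gsl δ a)
        = ∑ δ, (∑ γ, g b γ * ginv γ δ) * gsl δ a := by
      simp only [Finset.mul_sum, Finset.sum_mul]
      rw [Finset.sum_comm]
      congr 1; funext γ; congr 1; funext δ
      rw [hgsym δ b]; ring
    rw [h1]
    simp only [hinv]
    simp [Finset.sum_ite_eq]
  have expand : ∀ a b, (∑ γ, g γ b * ((N a γ - (1/2) * ∑ δ, ginv γ δ * gsl δ a) + dS a γ))
      = (∑ γ, g γ b * (N a γ + dS a γ)) - (1/2) * gsl b a := by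
    intro a b
    have h2 : (∑ γ, g γ b * ((N a γ - (1/2) * ∑ δ, ginv γ δ * gsl δ a) + dS a γ))
        = (∑ γ, g γ b * (N a γ + dS a γ))
          - (1/2) * (∑ γ, g γ b * ∑ δ, ginv γ δ * gsl δ a) := by
      rw [Finset.mul_sum, ← Finset.sum_sub_distrib]
      congr 1; funext γ; ring
    rw [h2, key]
  rw [expand, expand]
  have hid : Sg α β + (∑ γ, g γ β * (N α γ + dS α γ)) + (∑ γ, g γ α * (N β γ + dS β γ))
      = gsl α β := rfl
  rw [hgslsym β α]
  linarith [hid]
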